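/- arXiv:2008.02061 — 4 statements merged into one kernel-verified Lean document; each statement's English description precedes it below -/
import Mathlib

section
/- Let F(e, θ₀) = (f₁(e,θ₀), f₂(e,θ₀)) with f₁(e,θ₀) = (3√(1−e²))/(32 H₀³ (1+e cos θ₀)^{3/2}) · [3e² − 8H₀ − 4e(−1+2H₀)cos θ₀ + e² cos 2θ₀] and f₂(e,θ₀) = (3e√(1−e²) sin θ₀)/(16 H₀³ √(1+e cos θ₀)). For H₀ ∈ (−1/2, 0), the Jacobian determinant of F at (e, θ₀) = (−2H₀, π) equals 9(2H₀ − 1)/(64 H₀⁵), which is nonzero. -/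
open Real

/-!
On the line `θ₀ = π` the vector field simplifies drastically: `f₂(e, π) = 0`, and
`f₁(e, π) = -3 (e + 2H₀) √(1 + e) / (8 H₀³)` because the bracket factors as `4 (e - 1)(e + 2H₀)`.
Moreover `f₁(e, ·)` is a function of `cos θ₀`, so `∂f₁/∂θ₀` vanishes at `π`, and
`f₂(e, ·) = sin θ₀ · g(θ₀)` with `sin π = 0`, so `∂f₂/∂θ₀ (π) = -g(π)`. The Jacobian matrix at
`(-2H₀, π)` is therefore diagonal, and its determinant is a product of two explicit numbers.
-/

noncomputable def F₁ (H e θ : ℝ) : ℝ :=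
  3 * √(1 - e ^ 2) / (32 * H ^ 3 * (1 + e * cos θ) ^ ((3:ℝ)/2)) *
    (3 * e ^ 2 - 8 * H - 4 * e * (-1 + 2 * H) * cos θ + e ^ 2 * cos (2 * θ))

noncomputable def F₂ (H e θ : ℝ) : ℝ :=
  3 * e * √(1 - e ^ 2) * sin θ / (16 * H ^ 3 * √(1 + e * cos θ))

theorem HasDerivAt.mul_of_eq_zero {f g : ℝ → ℝ} {f' x : ℝ} (hf : HasDerivAt f f' x)
    (hfx : f x = 0) (hg : DifferentiableAt ℝ g x) :
    HasDerivAt (fun y => f y * g y) (f' * g x) x := by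
  have h := hf.mul hg.hasDerivAt
  rwa [hfx, zero_mul, add_zero] at h

theorem hasDerivAt_comp_cos_of_sin_eq_zero {g : ℝ → ℝ} {x : ℝ} (hx : sin x = 0)
    (hg : DifferentiableAt ℝ g (cos x)) : HasDerivAt (fun θ => g (cos θ)) 0 x := by
  have h := hg.hasDerivAt.comp x (hasDerivAt_cos x)
  rwa [hx, neg_zero, mul_zero] at h

theorem sqrt_one_sub_sq {e : ℝ} (he : e ≤ 1) : √(1 - e ^ 2) = √(1 - e) * √(1 + e) := by
  rw [← sqrt_mul (sub_nonneg.2 he)]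
  ring_nf

theorem F₁_pi (H : ℝ) {e : ℝ} (he : e < 1) :
    F₁ H e π = -3 * ((e + 2 * H) * √(1 + e)) / (8 * H ^ 3) := by
  have h1e : 0 < 1 - e := by linarith
  have hpow : (1 + e * cos π) ^ ((3:ℝ)/2) = (1 - e) * √(1 - e) := by
    rw [cos_pi, show 1 + e * -1 = 1 - e by ring, show (3:ℝ)/2 = 1 + 1/2 by norm_num,
      rpow_add h1e, rpow_one, ← sqrt_eq_rpow]
  rw [F₁, hpow, cos_pi, cos_two_pi, sqrt_one_sub_sq he.le]
  field_simp
  ring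

theorem F₂_pi (H e : ℝ) : F₂ H e π = 0 := by
  simp [F₂]

theorem hasDerivAt_F₁_fst {H : ℝ} (hH : -1/2 < H) (hH' : H < 1/2) :
    HasDerivAt (fun e => F₁ H e π) (-3 * √(1 - 2 * H) / (8 * H ^ 3)) (-2 * H) := by
  have hlin : HasDerivAt (fun e : ℝ => e + 2 * H) 1 (-2 * H) := (hasDerivAt_id _).add_const _
  have hsqrt : HasDerivAt (fun e : ℝ => √(1 + e)) (1 / (2 * √(1 + -2 * H))) (-2 * H) :=
    ((hasDerivAt_id _).const_add 1).sqrt (ne_of_gt (by linarith))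
  have hclosed := ((hlin.mul hsqrt).const_mul (-3)).div_const (8 * H ^ 3)
  have hs : 0 < √(1 - 2 * H) := sqrt_pos.mpr (by linarith)
  refine (hclosed.congr_deriv ?_).congr_of_eventuallyEq ?_
  · rw [show 1 + -2 * H = 1 - 2 * H by ring]
    field_simp
    ring
  · filter_upwards [Iio_mem_nhds (show -2 * H < 1 by linarith)] with e he
    exact F₁_pi H he

theorem hasDerivAt_F₁_snd_pi {H e : ℝ} (hH : H ≠ 0) (he : e < 1) :
    HasDerivAt (fun θ => F₁ H e θ) 0 π := by
  set g : ℝ → ℝ := fun u => 3 * √(1 - e ^ 2) / (32 * H ^ 3 * (1 + e * u) ^ ((3:ℝ)/2)) *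
    (3 * e ^ 2 - 8 * H - 4 * e * (-1 + 2 * H) * u + e ^ 2 * (2 * u ^ 2 - 1))
  have hF : (fun θ => F₁ H e θ) = fun θ => g (cos θ) := by
    funext θ
    simp only [F₁, g, cos_two_mul]
  have hbase : 0 < 1 + e * cos π := by rw [cos_pi]; linarith
  have hg : DifferentiableAt ℝ g (cos π) := by
    refine DifferentiableAt.mul (DifferentiableAt.div (by fun_prop) ?_ ?_) (by fun_prop)
    · exact (((differentiableAt_id.const_mul e).const_add 1).rpow_const (p := (3:ℝ)/2)
        (Or.inr (by norm_num))).const_mul _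
    · exact mul_ne_zero (by positivity) (rpow_pos_of_pos hbase _).ne'
  rw [hF]
  exact hasDerivAt_comp_cos_of_sin_eq_zero sin_pi hg

theorem hasDerivAt_F₂_snd_pi {H e : ℝ} (hH : H ≠ 0) (he : e < 1) :
    HasDerivAt (fun θ => F₂ H e θ) (-3 * e * √(1 + e) / (16 * H ^ 3)) π := by
  set g : ℝ → ℝ := fun θ => 3 * e * √(1 - e ^ 2) / (16 * H ^ 3 * √(1 + e * cos θ))
  have hF : (fun θ => F₂ H e θ) = fun θ => sin θ * g θ := by
    funext θ
    simp only [F₂, g]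
    ring
  have hbase : 1 + e * cos π = 1 - e := by rw [cos_pi]; ring
  have hs : 0 < √(1 - e) := sqrt_pos.mpr (by linarith)
  have hg : DifferentiableAt ℝ g π := by
    refine DifferentiableAt.div (by fun_prop) ?_ ?_
    · exact (((differentiableAt_cos.const_mul e).const_add 1).sqrt
        (by rw [hbase]; linarith)).const_mul _
    · rw [hbase]; positivity
  rw [hF]
  refine ((hasDerivAt_sin π).mul_of_eq_zero sin_pi hg).congr_deriv ?_
  simp only [g, hbase, sqrt_one_sub_sq he.le]
  field_simp
  rw [cos_pi]
  ring

/-- The Jacobian determinant of `F = (f₁, f₂)` at `(e, θ₀) = (−2H₀, π)` equals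
`9(2H₀ − 1)/(64 H₀⁵) ≠ 0`. -/
theorem jacobian_at_simple_zero (H₀ : ℝ) (hH1 : -1/2 < H₀) (hH2 : H₀ < 0)
    (f₁ f₂ : ℝ → ℝ → ℝ)
    (hf₁ : ∀ e θ₀, f₁ e θ₀ =
      3 * Real.sqrt (1 - e ^ 2) / (32 * H₀ ^ 3 * (1 + e * Real.cos θ₀) ^ ((3:ℝ)/2)) *
        (3 * e ^ 2 - 8 * H₀ - 4 * e * (-1 + 2 * H₀) * Real.cos θ₀ +
          e ^ 2 * Real.cos (2 * θ₀)))
    (hf₂ : ∀ e θ₀, f₂ e θ₀ =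
      3 * e * Real.sqrt (1 - e ^ 2) * Real.sin θ₀ /
        (16 * H₀ ^ 3 * Real.sqrt (1 + e * Real.cos θ₀))) :
    ∃ a b c d : ℝ,
      HasDerivAt (fun e => f₁ e π) a (-2 * H₀) ∧
      HasDerivAt (fun θ₀ => f₁ (-2 * H₀) θ₀) b π ∧
      HasDerivAt (fun e => f₂ e π) c (-2 * H₀) ∧
      HasDerivAt (fun θ₀ => f₂ (-2 * H₀) θ₀) d π ∧
      a * d - b * c = 9 * (2 * H₀ - 1) / (64 * H₀ ^ 5) ∧
      a * d - b * c ≠ 0 := by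
  obtain rfl : f₁ = F₁ H₀ := funext fun e => funext (hf₁ e)
  obtain rfl : f₂ = F₂ H₀ := funext fun e => funext (hf₂ e)
  have hH : H₀ ≠ 0 := hH2.ne
  have he : -2 * H₀ < 1 := by linarith
  have hdet : -3 * √(1 - 2 * H₀) / (8 * H₀ ^ 3) * (-3 * (-2 * H₀) * √(1 + -2 * H₀) / (16 * H₀ ^ 3))
      - 0 * 0 = 9 * (2 * H₀ - 1) / (64 * H₀ ^ 5) := by
    have hsq : √(1 - 2 * H₀) ^ 2 = 1 - 2 * H₀ := sq_sqrt (by linarith)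
    rw [show 1 + -2 * H₀ = 1 - 2 * H₀ by ring]
    field_simp
    linear_combination -1152 * hsq
  refine ⟨_, 0, 0, _, hasDerivAt_F₁_fst hH1 (by linarith), hasDerivAt_F₁_snd_pi hH he, ?_,
    hasDerivAt_F₂_snd_pi hH he, hdet, ?_⟩
  · simpa only [F₂_pi] using hasDerivAt_const (-2 * H₀) (0 : ℝ)
  · rw [hdet]
    exact div_ne_zero (by linarith) (by positivity)
end

section
/- For H₀ < 0 and u² + v² < 2, the first-order coefficient in the expansion r = R₀ + μR₁ + O(μ²) of the energy relation (6), obtained by differentiating the energy relation implicitly at μ = 0, is R₁ = (1/H₀)·[1 − R₀ − R₀³ + ((1+2R₀³)/R₀)cos θ], where R₀ = (u²+v²−2)/(2H₀). -/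
open Real

/-- Implicit differentiation of the energy relation at `μ = 0` yields the
first-order coefficient `R₁ = (1/H₀)(1 − R₀ − R₀³ + ((1+2R₀³)/R₀)cos θ)`. -/
theorem energy_relation_first_order_coefficient (H₀ u v θ R₁ : ℝ) (hH : H₀ < 0)
    (huv : u ^ 2 + v ^ 2 < 2)
    (r : ℝ → ℝ)
    (hr0 : r 0 = (u ^ 2 + v ^ 2 - 2) / (2 * H₀))
    (hrel : ∀ᶠ μ in nhds (0:ℝ),
      (u ^ 2 + v ^ 2) / 2 - 1 +
        μ * (1 - r μ - (r μ) ^ 3 + (1 + 2 * (r μ) ^ 3) / r μ * Real.cos θ)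
        = r μ * H₀)
    (hderiv : HasDerivAt r R₁ 0) :
    R₁ = (1 / H₀) *
      (1 - r 0 - (r 0) ^ 3 + (1 + 2 * (r 0) ^ 3) / r 0 * Real.cos θ) := by
  have hr0pos : 0 < r 0 := by
    rw [hr0]
    apply div_pos_of_neg_of_neg <;> linarith
  have hr0ne : r 0 ≠ 0 := ne_of_gt hr0pos
  set g : ℝ → ℝ := fun μ =>
    1 - r μ - (r μ) ^ 3 + (1 + 2 * (r μ) ^ 3) / r μ * Real.cos θ with hg
  -- g is differentiable at 0
  have hcube : HasDerivAt (fun μ => (r μ) ^ 3) (3 * (r 0) ^ 2 * R₁) 0 := by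
    have := hderiv.fun_pow 3
    simpa [mul_comm, mul_assoc, mul_left_comm] using this
  have hnum : HasDerivAt (fun μ => 1 + 2 * (r μ) ^ 3) (2 * (3 * (r 0) ^ 2 * R₁)) 0 :=
    (hcube.const_mul 2).const_add 1
  have hdivd : HasDerivAt (fun μ => (1 + 2 * (r μ) ^ 3) / r μ)
      ((2 * (3 * (r 0) ^ 2 * R₁) * r 0 - (1 + 2 * (r 0) ^ 3) * R₁) / (r 0) ^ 2) 0 :=
    hnum.div hderiv hr0ne
  have hgd : HasDerivAt g
      (0 - R₁ - 3 * (r 0) ^ 2 * R₁ +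
        (2 * (3 * (r 0) ^ 2 * R₁) * r 0 - (1 + 2 * (r 0) ^ 3) * R₁) / (r 0) ^ 2
          * Real.cos θ) 0 := by
    exact (((hasDerivAt_const (0:ℝ) (1:ℝ)).sub hderiv).sub hcube).add
      (hdivd.mul_const (Real.cos θ))
  set D := (0 - R₁ - 3 * (r 0) ^ 2 * R₁ +
        (2 * (3 * (r 0) ^ 2 * R₁) * r 0 - (1 + 2 * (r 0) ^ 3) * R₁) / (r 0) ^ 2
          * Real.cos θ) with hD
  have hLHS : HasDerivAt (fun μ => (u ^ 2 + v ^ 2) / 2 - 1 + μ * g μ)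
      (g 0) 0 := by
    have := ((hasDerivAt_id (0:ℝ)).mul hgd).const_add ((u ^ 2 + v ^ 2) / 2 - 1)
    simpa using this
  have hRHS : HasDerivAt (fun μ => r μ * H₀) (R₁ * H₀) 0 := hderiv.mul_const H₀
  have hLHS' : HasDerivAt (fun μ => r μ * H₀) (g 0) 0 := by
    apply hLHS.congr_of_eventuallyEq
    filter_upwards [hrel] with μ h
    exact h.symm
  have huniq : g 0 = R₁ * H₀ := hLHS'.unique hRHS
  have : g 0 = 1 - r 0 - (r 0) ^ 3 + (1 + 2 * (r 0) ^ 3) / r 0 * Real.cos θ := rfl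
  rw [this] at huniq
  have hH0 : H₀ ≠ 0 := ne_of_lt hH
  field_simp at huniq ⊢
  linarith [huniq]
end

section
/- For e ∈ (0,1), H₀ < 0, the averaged second component (1/(2π))∫₀^{2π} G₂(θ; e, θ₀) dθ equals f₂(e,θ₀) = (3e√(1−e²)·sin θ₀)/(16H₀³√(1+e cos θ₀)), where G₂ is given by the explicit formula in the paper involving sin θ times terms with (1+e cos(θ−θ₀))^{−3}. -/
/-!
Write `D = 1 + e cos(θ - θ₀)`. Since `cos(2θ - θ₀) = 2 cos θ cos(θ - θ₀) - cos θ₀`, the function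
`8 √(1 + e cos θ₀) G₂` is the sum of `sin θ` times a trigonometric polynomial, a multiple of
`2 sin θ (cos θ + e cos θ₀) / D³ = (sin² θ / D²)'`, and `(-1 + e²)³ / H₀³ · sin θ / D³`. The first
two are derivatives of periodic functions. Up to another such derivative, `sin θ / D³` equals
`-3e sin θ₀ / (2 (1 - e²)² D)`, and `√(1 - e²) / D` is the derivative of the eccentric anomaly
`E(θ - θ₀)`, which gains exactly `2π` over a period. So the mean of `G₂` is `f₂` times the mean
of `E'`, which is `1`.
-/

open Real Function

theorem one_add_mul_cos_pos {b : ℝ} (hb : |b| < 1) (φ : ℝ) : 0 < 1 + b * cos φ := by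
  have := abs_mul b (cos φ)
  have := mul_le_of_le_one_right (abs_nonneg b) (abs_cos_le_one φ)
  have := neg_abs_le (b * cos φ)
  linarith

theorem hasDerivAt_sub_two_mul_arctan {b : ℝ} (hb : |b| < 1) (φ : ℝ) :
    HasDerivAt (fun φ => φ - 2 * arctan (b * sin φ / (1 + b * cos φ)))
      ((1 - b ^ 2) / (1 + b ^ 2 + 2 * b * cos φ)) φ := by
  have hden := one_add_mul_cos_pos hb φ
  have hW := ((hasDerivAt_sin φ).const_mul b).fun_div
    (((hasDerivAt_cos φ).const_mul b).const_add 1) hden.ne'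
  refine ((hasDerivAt_id' φ).sub (hW.arctan.const_mul 2)).congr_deriv ?_
  have : 0 < 1 + b ^ 2 + 2 * b * cos φ := by nlinarith [sin_sq_add_cos_sq φ]
  field_simp
  linear_combination (-2 * b ^ 2 * (1 + b * cos φ)) * sin_sq_add_cos_sq φ

/-- The eccentric anomaly as a function of the true anomaly `φ`. Unlike the textbook formula
`2 arctan (√((1 - e) / (1 + e)) tan (φ / 2))` it is smooth on all of `ℝ`. -/
noncomputable def eccentricAnomaly (e φ : ℝ) : ℝ :=
  φ - 2 * arctan (e / (1 + √(1 - e ^ 2)) * sin φ / (1 + e / (1 + √(1 - e ^ 2)) * cos φ))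

theorem hasDerivAt_eccentricAnomaly {e : ℝ} (he : |e| < 1) (φ : ℝ) :
    HasDerivAt (eccentricAnomaly e) (√(1 - e ^ 2) / (1 + e * cos φ)) φ := by
  have hr : √(1 - e ^ 2) ^ 2 = 1 - e ^ 2 := sq_sqrt (by nlinarith [sq_abs e, abs_nonneg e])
  have hr0 := sqrt_nonneg (1 - e ^ 2)
  have hb : |e / (1 + √(1 - e ^ 2))| < 1 := by
    rw [abs_div, abs_of_pos (show 0 < 1 + √(1 - e ^ 2) by positivity), div_lt_one (by linarith)]
    linarith
  have hD := one_add_mul_cos_pos he φ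
  have hden := one_add_mul_cos_pos hb φ
  refine (hasDerivAt_sub_two_mul_arctan hb φ).congr_deriv ?_
  rw [div_eq_div_iff (by nlinarith [sin_sq_add_cos_sq φ]) hD.ne']
  field_simp
  linear_combination (-1 - e * cos φ - √(1 - e ^ 2)) * hr

theorem eccentricAnomaly_add_two_pi (e φ : ℝ) :
    eccentricAnomaly e (φ + 2 * π) = eccentricAnomaly e φ + 2 * π := by
  simp only [eccentricAnomaly, sin_add_two_pi, cos_add_two_pi]
  ring

theorem hasDerivAt_primitive_sin_div_pow_three {e φ : ℝ} (hD : 1 + e * cos φ ≠ 0) :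
    HasDerivAt (fun φ => -(cos φ * (2 + e * cos φ)) / (2 * (1 + e * cos φ) ^ 2))
      (sin φ / (1 + e * cos φ) ^ 3) φ := by
  have hc := hasDerivAt_cos φ
  refine ((hc.fun_mul ((hc.const_mul e).const_add 2)).fun_neg.fun_div
    (((hc.const_mul e).const_add 1).fun_pow 2 |>.const_mul 2) (by positivity)).congr_deriv ?_
  field_simp
  ring

theorem hasDerivAt_primitive_cos_div_pow_three {e φ : ℝ} (hD : 1 + e * cos φ ≠ 0)
    (he : 1 - e ^ 2 ≠ 0) :
    HasDerivAt
      (fun φ => sin φ * ((1 + 2 * e ^ 2) * (1 + e * cos φ) + 1 - e ^ 2) /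
        (2 * (1 - e ^ 2) ^ 2 * (1 + e * cos φ) ^ 2))
      (cos φ / (1 + e * cos φ) ^ 3 + 3 * e / (2 * (1 - e ^ 2) ^ 2 * (1 + e * cos φ))) φ := by
  have hc := hasDerivAt_cos φ
  have hD' := (hc.const_mul e).const_add 1
  have hnum := ((hD'.const_mul (1 + 2 * e ^ 2)).add_const 1).sub_const (e ^ 2)
  refine ((hasDerivAt_sin φ).fun_mul hnum |>.fun_div
    ((hD'.fun_pow 2).const_mul (2 * (1 - e ^ 2) ^ 2)) (by positivity)).congr_deriv ?_
  norm_num only [Nat.cast_ofNat]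
  field_simp
  linear_combination
    e * (cos φ * e + 2 * cos φ * e ^ 3 + 3) / (1 + e * cos φ) ^ 3 * sin_sq_add_cos_sq φ

theorem hasDerivAt_primitive_sin_div_pow_three_sub {e θ₀ θ : ℝ} (hD : 1 + e * cos (θ - θ₀) ≠ 0)
    (he : 1 - e ^ 2 ≠ 0) :
    HasDerivAt
      (fun θ => cos θ₀ * (-(cos (θ - θ₀) * (2 + e * cos (θ - θ₀))) /
          (2 * (1 + e * cos (θ - θ₀)) ^ 2)) +
        sin θ₀ * (sin (θ - θ₀) * ((1 + 2 * e ^ 2) * (1 + e * cos (θ - θ₀)) + 1 - e ^ 2) /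
          (2 * (1 - e ^ 2) ^ 2 * (1 + e * cos (θ - θ₀)) ^ 2)))
      (sin θ / (1 + e * cos (θ - θ₀)) ^ 3 +
        3 * e * sin θ₀ / (2 * (1 - e ^ 2) ^ 2 * (1 + e * cos (θ - θ₀)))) θ := by
  refine ((((hasDerivAt_primitive_sin_div_pow_three hD).comp_sub_const θ θ₀).const_mul
    (cos θ₀)).add (((hasDerivAt_primitive_cos_div_pow_three hD he).comp_sub_const θ θ₀).const_mul
    (sin θ₀))).congr_deriv ?_
  rw [show sin θ = sin (θ - θ₀ + θ₀) by rw [sub_add_cancel], sin_add]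
  ring

theorem hasDerivAt_sin_sq_div_sq {e θ₀ θ : ℝ} (hD : 1 + e * cos (θ - θ₀) ≠ 0) :
    HasDerivAt (fun θ => sin θ ^ 2 / (1 + e * cos (θ - θ₀)) ^ 2)
      (2 * sin θ * (cos θ + e * cos θ₀) / (1 + e * cos (θ - θ₀)) ^ 3) θ := by
  have hD' := (((hasDerivAt_cos (θ - θ₀)).comp_sub_const θ θ₀).const_mul e).const_add 1
  refine (((hasDerivAt_sin θ).fun_pow 2).fun_div (hD'.fun_pow 2)
    (pow_ne_zero 2 hD)).congr_deriv ?_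
  norm_num only [Nat.cast_ofNat]
  rw [cos_sub] at hD ⊢
  rw [sin_sub]
  field_simp
  linear_combination e * cos θ₀ * sin θ * sin_sq_add_cos_sq θ

theorem hasDerivAt_primitive_trigPoly (e θ₀ θ : ℝ) :
    HasDerivAt
      (fun θ => 2 * sin θ ^ 2 + e * (sin θ₀ * sin θ ^ 3 - cos θ₀ * cos θ ^ 3 - cos θ₀ * cos θ))
      (sin θ * (4 * cos θ + 3 * e * cos θ * cos (θ - θ₀) + e * cos θ₀)) θ := by
  have hs := hasDerivAt_sin θ
  have hc := hasDerivAt_cos θ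
  have hpoly := (((hs.fun_pow 3).const_mul (sin θ₀)).sub ((hc.fun_pow 3).const_mul (cos θ₀))).sub
    (hc.const_mul (cos θ₀))
  refine (((hs.fun_pow 2).const_mul 2).add (hpoly.const_mul e)).congr_deriv ?_
  norm_num only [Nat.cast_ofNat]
  rw [cos_sub]
  ring

noncomputable def g₂ (e H₀ θ₀ θ : ℝ) : ℝ :=
  sin θ / (8 * √(1 + e * cos θ₀)) *
      ((4 + (-1 + e ^ 2) ^ 3 / (H₀ ^ 3 * (1 + e * cos (θ - θ₀)) ^ 3)
          + 16 * H₀ * cos θ * (1 + e * cos (θ - θ₀)) / (-1 + e ^ 2) *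
            (1 - (-1 + e ^ 2) ^ 3 / (8 * H₀ ^ 3 * (1 + e * cos (θ - θ₀)) ^ 3)))
        + 4 * H₀ * (4 * cos θ + e * (cos (2 * θ - θ₀) + 3 * cos θ₀)) / (-1 + e ^ 2) *
            (1 + (-1 + e ^ 2) ^ 3 / (4 * H₀ ^ 3 * (1 + e * cos (θ - θ₀)) ^ 3)))

noncomputable def f₂ (e H₀ θ₀ : ℝ) : ℝ :=
  3 * e * √(1 - e ^ 2) * sin θ₀ / (16 * H₀ ^ 3 * √(1 + e * cos θ₀))

theorem g₂_eq {e H₀ θ₀ θ : ℝ} (hH : H₀ ≠ 0) (hK : -1 + e ^ 2 ≠ 0)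
    (hD : 1 + e * cos (θ - θ₀) ≠ 0) :
    g₂ e H₀ θ₀ θ = (4 * sin θ
      + 8 * H₀ / (-1 + e ^ 2) * (sin θ * (4 * cos θ + 3 * e * cos θ * cos (θ - θ₀) + e * cos θ₀))
      + (-1 + e ^ 2) ^ 3 / H₀ ^ 3 * (sin θ / (1 + e * cos (θ - θ₀)) ^ 3)
      + (-1 + e ^ 2) ^ 2 / H₀ ^ 2 *
          (2 * sin θ * (cos θ + e * cos θ₀) / (1 + e * cos (θ - θ₀)) ^ 3)) /
      (8 * √(1 + e * cos θ₀)) := by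
  have hcos : cos (2 * θ - θ₀) = 2 * cos θ * cos (θ - θ₀) - cos θ₀ := by
    rw [eq_sub_iff_add_eq, cos_add_cos]
    ring_nf
  rw [g₂, hcos]
  field_simp
  ring

theorem integral_eq_of_hasDerivAt_periodic_add_mul {f P E : ℝ → ℝ} {a T c k : ℝ}
    (hf : IntervalIntegrable f MeasureTheory.volume a (a + T)) (hP : Periodic P T)
    (hE : ∀ x, E (x + T) = E x + c) (hd : ∀ x, HasDerivAt (fun x => P x + k * E x) (f x) x) :
    ∫ x in a..a + T, f x = k * c := by
  rw [intervalIntegral.integral_eq_sub_of_hasDerivAt (fun x _ => hd x) hf, hP a, hE a]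
  ring

theorem exists_periodic_primitive_g₂ {e H₀ : ℝ} (hH : H₀ ≠ 0) (he : |e| < 1) (θ₀ : ℝ) :
    ∃ P : ℝ → ℝ, Periodic P (2 * π) ∧
      ∀ θ, HasDerivAt (fun θ => P θ + f₂ e H₀ θ₀ * eccentricAnomaly e (θ - θ₀))
        (g₂ e H₀ θ₀ θ) θ := by
  have hK : -1 + e ^ 2 ≠ 0 := by nlinarith [sq_abs e, abs_nonneg e]
  have hK' : 1 - e ^ 2 ≠ 0 := by nlinarith [sq_abs e, abs_nonneg e]
  have hr : √(1 - e ^ 2) ^ 2 = 1 - e ^ 2 := sq_sqrt (by nlinarith [sq_abs e, abs_nonneg e])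
  refine ⟨fun θ => (-4 * cos θ
    + 8 * H₀ / (-1 + e ^ 2) *
        (2 * sin θ ^ 2 + e * (sin θ₀ * sin θ ^ 3 - cos θ₀ * cos θ ^ 3 - cos θ₀ * cos θ))
    + (-1 + e ^ 2) ^ 3 / H₀ ^ 3 *
        (cos θ₀ * (-(cos (θ - θ₀) * (2 + e * cos (θ - θ₀))) / (2 * (1 + e * cos (θ - θ₀)) ^ 2)) +
          sin θ₀ * (sin (θ - θ₀) * ((1 + 2 * e ^ 2) * (1 + e * cos (θ - θ₀)) + 1 - e ^ 2) /
            (2 * (1 - e ^ 2) ^ 2 * (1 + e * cos (θ - θ₀)) ^ 2)))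
    + (-1 + e ^ 2) ^ 2 / H₀ ^ 2 * (sin θ ^ 2 / (1 + e * cos (θ - θ₀)) ^ 2)) /
      (8 * √(1 + e * cos θ₀)), fun θ => ?_, fun θ => ?_⟩
  · simp only [add_sub_right_comm θ (2 * π) θ₀, sin_add_two_pi, cos_add_two_pi]
  · have hD := one_add_mul_cos_pos he (θ - θ₀)
    refine ((((((hasDerivAt_cos θ).const_mul (-4)).add
      ((hasDerivAt_primitive_trigPoly e θ₀ θ).const_mul _)).add
      ((hasDerivAt_primitive_sin_div_pow_three_sub hD.ne' hK').const_mul _)).add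
      ((hasDerivAt_sin_sq_div_sq hD.ne').const_mul _)).div_const _).add
      (((hasDerivAt_eccentricAnomaly he (θ - θ₀)).comp_sub_const θ θ₀).const_mul _)
      |>.congr_deriv ?_
    have hf₂ : f₂ e H₀ θ₀ * (√(1 - e ^ 2) / (1 + e * cos (θ - θ₀))) =
        3 * e * (1 - e ^ 2) * sin θ₀ / (16 * H₀ ^ 3 * √(1 + e * cos θ₀)) /
          (1 + e * cos (θ - θ₀)) := by
      rw [f₂]
      linear_combination
        3 * e * sin θ₀ / (16 * H₀ ^ 3 * √(1 + e * cos θ₀)) / (1 + e * cos (θ - θ₀)) * hr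
    rw [g₂_eq hH hK hD.ne', hf₂]
    field_simp
    ring

theorem continuous_g₂ {e H₀ : ℝ} (hH : H₀ ≠ 0) (he : |e| < 1) (θ₀ : ℝ) :
    Continuous (g₂ e H₀ θ₀) := by
  have hD := fun θ => one_add_mul_cos_pos he (θ - θ₀)
  unfold g₂
  fun_prop (disch := exact fun θ => by have := hD θ; positivity)

/-- The average over `[0, 2π]` of `G₂(θ; e, θ₀)` equals
`f₂(e,θ₀) = 3e√(1−e²) sin θ₀ / (16H₀³√(1+e cos θ₀))`. -/
theorem averaged_G2_equals_f2 (H₀ e θ₀ : ℝ) (hH : H₀ < 0) (he : 0 < e) (he1 : e < 1)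
    (G₂ : ℝ → ℝ)
    (hG₂ : ∀ θ, G₂ θ = Real.sin θ / (8 * Real.sqrt (1 + e * Real.cos θ₀)) *
      ((4 + (-1 + e ^ 2) ^ 3 / (H₀ ^ 3 * (1 + e * Real.cos (θ - θ₀)) ^ 3)
          + 16 * H₀ * Real.cos θ * (1 + e * Real.cos (θ - θ₀)) / (-1 + e ^ 2) *
            (1 - (-1 + e ^ 2) ^ 3 / (8 * H₀ ^ 3 * (1 + e * Real.cos (θ - θ₀)) ^ 3)))
        + 4 * H₀ * (4 * Real.cos θ + e * (Real.cos (2 * θ - θ₀) + 3 * Real.cos θ₀)) /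
            (-1 + e ^ 2) *
            (1 + (-1 + e ^ 2) ^ 3 / (4 * H₀ ^ 3 * (1 + e * Real.cos (θ - θ₀)) ^ 3)))) :
    (1 / (2 * π)) * ∫ θ in (0:ℝ)..(2 * π), G₂ θ =
      3 * e * Real.sqrt (1 - e ^ 2) * Real.sin θ₀ /
        (16 * H₀ ^ 3 * Real.sqrt (1 + e * Real.cos θ₀)) := by
  obtain rfl : G₂ = g₂ e H₀ θ₀ := funext hG₂
  have he' : |e| < 1 := abs_lt.mpr ⟨by linarith, he1⟩
  obtain ⟨P, hP, hderiv⟩ := exists_periodic_primitive_g₂ hH.ne he' θ₀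
  have hE (θ : ℝ) :
      eccentricAnomaly e (θ + 2 * π - θ₀) = eccentricAnomaly e (θ - θ₀) + 2 * π := by
    rw [add_sub_right_comm, eccentricAnomaly_add_two_pi]
  have hmean := integral_eq_of_hasDerivAt_periodic_add_mul
    ((continuous_g₂ hH.ne he' θ₀).intervalIntegrable 0 (0 + 2 * π)) hP hE hderiv
  rw [zero_add] at hmean
  rw [hmean, ← f₂]
  field_simp
end

section
/- Let H₀ ∈ (−1/2, 0), e = −2H₀, θ₀ = π. Then f₁(e, θ₀) = 0 and f₂(e, θ₀) = 0, and the point (e, θ₀) = (−2H₀, π) is a simple zero of the map F = (f₁, f₂) (the Jacobian determinant there is 9(2H₀−1)/(64H₀⁵) ≠ 0). Consequently, by the averaging theorem (Proposition 1 of the paper), for μ > 0 sufficiently small the perturbed system (8) admits a 2π-periodic solution converging as μ → 0 to the Kepler solution with e = −2H₀, θ₀ = π. -/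
/-!
At `θ₀ = π` the sine factor kills `f₂` for every `e`, and the bracket in `f₁` factors as
`4(e - 1)(e + 2H₀)`, so that `f₁(e, π) = -3 (e + 2H₀) √(1 + e) / (8H₀³)` for `e < 1`. Hence
`(−2H₀, π)` is a zero, `∂f₂/∂e` vanishes there and the Jacobian is triangular. Its determinant is
`∂f₁/∂e · ∂f₂/∂θ₀`; since `sin π = 0`, only the derivative of `sin θ₀` contributes to
`∂f₂/∂θ₀`, giving `(−3√(1 − 2H₀)/(8H₀³)) · (3√(1 − 2H₀)/(8H₀²)) = 9(2H₀ − 1)/(64H₀⁵)`.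
-/

open Real

theorem HasDerivAt.div_of_eq_zero {𝕜 : Type*} [NontriviallyNormedField 𝕜] {c d : 𝕜 → 𝕜}
    {c' x : 𝕜} (hc : HasDerivAt c c' x) (hd : DifferentiableAt 𝕜 d x) (hcx : c x = 0)
    (hdx : d x ≠ 0) : HasDerivAt (fun y => c y / d y) (c' / d x) x := by
  refine (hc.div hd.hasDerivAt hdx).congr_deriv ?_
  rw [hcx]
  field_simp
  ring

noncomputable def averagedF₁ (H₀ e θ₀ : ℝ) : ℝ :=
  3 * √(1 - e ^ 2) / (32 * H₀ ^ 3 * (1 + e * cos θ₀) ^ ((3:ℝ) / 2)) *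
    (3 * e ^ 2 - 8 * H₀ - 4 * e * (-1 + 2 * H₀) * cos θ₀ + e ^ 2 * cos (2 * θ₀))

noncomputable def averagedF₂ (H₀ e θ₀ : ℝ) : ℝ :=
  3 * e * √(1 - e ^ 2) * sin θ₀ / (16 * H₀ ^ 3 * √(1 + e * cos θ₀))

theorem averagedF₁_neg_two_mul_pi (H₀ : ℝ) : averagedF₁ H₀ (-2 * H₀) π = 0 := by
  rw [averagedF₁, cos_pi, cos_two_pi]
  ring

theorem averagedF₂_pi (H₀ e : ℝ) : averagedF₂ H₀ e π = 0 := by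
  simp [averagedF₂]

section

variable {H₀ e : ℝ}

theorem averagedF₁_pi (he : e < 1) :
    averagedF₁ H₀ e π = -(3 / (8 * H₀ ^ 3)) * ((e + 2 * H₀) * √(1 + e)) := by
  have h1e : 0 < 1 - e := by linarith
  have hpow : (1 + e * -1) ^ ((3:ℝ) / 2) = (1 - e) * √(1 - e) := by
    rw [show (3:ℝ) / 2 = 1 + 1 / 2 by norm_num, show 1 + e * -1 = 1 - e by ring,
      rpow_add h1e, rpow_one, ← sqrt_eq_rpow]
  have hsqrt : √(1 - e ^ 2) = √(1 - e) * √(1 + e) := by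
    rw [← sqrt_mul h1e.le]
    ring_nf
  have : 0 < √(1 - e) := sqrt_pos.mpr h1e
  rw [averagedF₁, cos_pi, cos_two_pi, hpow, hsqrt]
  field_simp
  ring

theorem hasDerivAt_averagedF₁_pi (hH₀ : -1 / 2 < H₀) (hH₀' : H₀ < 1 / 2) :
    HasDerivAt (fun e => averagedF₁ H₀ e π) (-(3 / (8 * H₀ ^ 3)) * √(1 - 2 * H₀)) (-2 * H₀) := by
  have hfactored : (fun e => averagedF₁ H₀ e π) =ᶠ[nhds (-2 * H₀)]
      fun e => -(3 / (8 * H₀ ^ 3)) * ((e + 2 * H₀) * √(1 + e)) :=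
    (eventually_lt_nhds (by linarith : -2 * H₀ < 1)).mono fun e he => averagedF₁_pi he
  refine HasDerivAt.congr_of_eventuallyEq ?_ hfactored
  have hsqrt : HasDerivAt (fun e => √(1 + e)) (1 / (2 * √(1 + -2 * H₀))) (-2 * H₀) :=
    ((hasDerivAt_id _).const_add 1).sqrt (by intro h; linarith)
  refine ((((hasDerivAt_id _).add_const (2 * H₀)).mul hsqrt).const_mul _).congr_deriv ?_
  simp only [id, neg_mul, neg_add_cancel, zero_mul, add_zero, one_mul,
    ← sub_eq_add_neg]

theorem differentiableAt_averagedF₁_pi (hH₀ : H₀ ≠ 0) (he : e < 1) :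
    DifferentiableAt ℝ (averagedF₁ H₀ e) π := by
  have hden : 32 * H₀ ^ 3 * (1 + e * cos π) ^ ((3:ℝ) / 2) ≠ 0 := by
    have : 0 < 1 + e * cos π := by rw [cos_pi]; linarith
    positivity
  have hexp : (1:ℝ) ≤ 3 / 2 := by norm_num
  unfold averagedF₁
  fun_prop (disch := first | assumption | exact Or.inr hexp)

theorem hasDerivAt_averagedF₂_pi (hH₀ : H₀ ≠ 0) (he : e < 1) :
    HasDerivAt (averagedF₂ H₀ e) (-(3 * e * √(1 - e ^ 2)) / (16 * H₀ ^ 3 * √(1 - e))) π := by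
  have hbase : 0 < 1 + e * cos π := by rw [cos_pi]; linarith
  have hden : 16 * H₀ ^ 3 * √(1 + e * cos π) ≠ 0 := by
    have := sqrt_pos.mpr hbase
    positivity
  have hnum := (hasDerivAt_sin π).const_mul (3 * e * √(1 - e ^ 2))
  refine (hnum.div_of_eq_zero (by fun_prop (disch := exact hbase.ne')) (by simp) hden)
    |>.congr_deriv ?_
  rw [cos_pi, mul_neg_one, mul_neg_one, ← sub_eq_add_neg, neg_div]

theorem hasDerivAt_averagedF₂_neg_two_mul_pi (hH₀ : -1 / 2 < H₀) (hH₀' : H₀ ≠ 0) :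
    HasDerivAt (averagedF₂ H₀ (-2 * H₀)) (3 * √(1 - 2 * H₀) / (8 * H₀ ^ 2)) π := by
  refine (hasDerivAt_averagedF₂_pi hH₀' (by linarith)).congr_deriv ?_
  have hplus : 0 < √(1 + 2 * H₀) := sqrt_pos.mpr (by linarith)
  rw [show 1 - (-2 * H₀) ^ 2 = (1 - 2 * H₀) * (1 + 2 * H₀) by ring,
    show 1 - -2 * H₀ = 1 + 2 * H₀ by ring, sqrt_mul' _ (by linarith)]
  field_simp
  ring

end

/-- For `H₀ ∈ (−1/2, 0)`, the point `(e, θ₀) = (−2H₀, π)` is a simple zero of the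
averaged map `F = (f₁, f₂)`: both components vanish there and the Jacobian
determinant equals `9(2H₀−1)/(64H₀⁵) ≠ 0`. -/
theorem simple_zero_of_averaged_map (H₀ : ℝ) (hH1 : -1/2 < H₀) (hH2 : H₀ < 0)
    (f₁ f₂ : ℝ → ℝ → ℝ)
    (hf₁ : ∀ e θ₀, f₁ e θ₀ =
      3 * Real.sqrt (1 - e ^ 2) / (32 * H₀ ^ 3 * (1 + e * Real.cos θ₀) ^ ((3:ℝ)/2)) *
        (3 * e ^ 2 - 8 * H₀ - 4 * e * (-1 + 2 * H₀) * Real.cos θ₀ +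
          e ^ 2 * Real.cos (2 * θ₀)))
    (hf₂ : ∀ e θ₀, f₂ e θ₀ =
      3 * e * Real.sqrt (1 - e ^ 2) * Real.sin θ₀ /
        (16 * H₀ ^ 3 * Real.sqrt (1 + e * Real.cos θ₀))) :
    f₁ (-2 * H₀) π = 0 ∧ f₂ (-2 * H₀) π = 0 ∧
    ∃ a b c d : ℝ,
      HasDerivAt (fun e => f₁ e π) a (-2 * H₀) ∧
      HasDerivAt (fun θ₀ => f₁ (-2 * H₀) θ₀) b π ∧
      HasDerivAt (fun e => f₂ e π) c (-2 * H₀) ∧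
      HasDerivAt (fun θ₀ => f₂ (-2 * H₀) θ₀) d π ∧
      a * d - b * c = 9 * (2 * H₀ - 1) / (64 * H₀ ^ 5) ∧
      a * d - b * c ≠ 0 := by
  obtain rfl : f₁ = averagedF₁ H₀ := funext₂ hf₁
  obtain rfl : f₂ = averagedF₂ H₀ := funext₂ hf₂
  have hf₂_pi : HasDerivAt (fun e => averagedF₂ H₀ e π) 0 (-2 * H₀) :=
    (hasDerivAt_const _ 0).congr_of_eventuallyEq (.of_forall (averagedF₂_pi H₀))
  have hdet : -(3 / (8 * H₀ ^ 3)) * √(1 - 2 * H₀) * (3 * √(1 - 2 * H₀) / (8 * H₀ ^ 2)) =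
      9 * (2 * H₀ - 1) / (64 * H₀ ^ 5) := by
    field_simp
    rw [sq_sqrt (by linarith)]
    ring
  refine ⟨averagedF₁_neg_two_mul_pi H₀, averagedF₂_pi H₀ _, _, _, 0, _,
    hasDerivAt_averagedF₁_pi hH1 (by linarith),
    (differentiableAt_averagedF₁_pi hH2.ne (by linarith)).hasDerivAt, hf₂_pi,
    hasDerivAt_averagedF₂_neg_two_mul_pi hH1 hH2.ne, ?_, ?_⟩ <;>
  rw [mul_zero, sub_zero, hdet]
  have := hH2.ne
  exact div_ne_zero (by intro h; linarith) (by positivity)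
end
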